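/- Let A_i ∈ ℝ^{m×n_i} for i = 1,…,N, ρ > 0, 0 < β < 2, and symmetric matrices P_i. If there exist ε_i > 0 with ∑_{i=1}^N ε_i ≤ 2 - β and P_i ⪰ ρ(1/ε_i - 1)A_iᵀA_i for all i, then the block matrix Q with diagonal blocks P_i + ρ A_iᵀA_i (for i = 1,…,N), lower-right block ((2-β)/(ρβ²))I_m, and off-diagonal coupling blocks (1/β)A_iᵀ (and transposes), is positive semidefinite. -/

import Mathlib

/-!
Since `∑ εᵢ ≤ 2 - β`, the multiplier term can be split into shares `εᵢ / (β²ρ) ‖λ‖²`, one per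
block. For a single block the hypothesis on `Pᵢ` gives `xᵀ (Pᵢ + ρ AᵢᵀAᵢ) x ≥ (ρ / εᵢ) ‖Aᵢ x‖²`,
and with `y = Aᵢ x` the block's share is a completed square:
`(ρ/ε) ‖y‖² + ε/(β²ρ) ‖λ‖² + (2/β) ⟪λ, y⟫ = (ρ/ε) ‖y + ε/(βρ) λ‖² ≥ 0`.
-/

open Matrix BigOperators

section

variable {ι κ : Type*} [Fintype ι] [Fintype κ]

lemma dotProduct_self_nonneg {R : Type*} [Ring R] [LinearOrder R] [IsStrictOrderedRing R]
    (v : ι → R) : 0 ≤ v ⬝ᵥ v :=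
  Finset.sum_nonneg fun _ _ => mul_self_nonneg _

lemma dotProduct_transpose_mul_self_mulVec {R : Type*} [CommSemiring R] (A : Matrix κ ι R)
    (x : ι → R) :
    x ⬝ᵥ ((Aᵀ * A) *ᵥ x) = (A *ᵥ x) ⬝ᵥ (A *ᵥ x) := by
  rw [← mulVec_mulVec, dotProduct_mulVec, vecMul_transpose]

lemma dotProduct_mulVec_ge_of_posSemidef_sub {A : Matrix κ ι ℝ} {P : Matrix ι ι ℝ} {t : ℝ}
    (hP : (P - t • (Aᵀ * A)).PosSemidef) (x : ι → ℝ) :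
    t * ((A *ᵥ x) ⬝ᵥ (A *ᵥ x)) ≤ x ⬝ᵥ (P *ᵥ x) := by
  have h := hP.dotProduct_mulVec_nonneg x
  rwa [star_trivial, sub_mulVec, smul_mulVec, dotProduct_sub, dotProduct_smul, smul_eq_mul,
    dotProduct_transpose_mul_self_mulVec, sub_nonneg] at h

lemma quadratic_form_nonneg {c : ℝ} (hc : 0 < c) (s : ℝ) (y l : ι → ℝ) :
    0 ≤ c * (y ⬝ᵥ y) + s ^ 2 / c * (l ⬝ᵥ l) + 2 * s * (l ⬝ᵥ y) := by
  have hsq : c * (y ⬝ᵥ y) + s ^ 2 / c * (l ⬝ᵥ l) + 2 * s * (l ⬝ᵥ y)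
      = c * ((y + (s / c) • l) ⬝ᵥ (y + (s / c) • l)) := by
    simp only [add_dotProduct, dotProduct_add, smul_dotProduct, dotProduct_smul, smul_eq_mul,
      dotProduct_comm y l]
    field_simp
    ring
  rw [hsq]
  exact mul_nonneg hc.le (dotProduct_self_nonneg _)

lemma block_quadratic_form_nonneg {A : Matrix κ ι ℝ} {P : Matrix ι ι ℝ} {ρ ε : ℝ}
    (hρ : 0 < ρ) (hε : 0 < ε) (hP : (P - (ρ * (1 / ε - 1)) • (Aᵀ * A)).PosSemidef)
    (β : ℝ) (x : ι → ℝ) (l : κ → ℝ) :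
    0 ≤ x ⬝ᵥ ((P + ρ • (Aᵀ * A)) *ᵥ x) + ε / (β ^ 2 * ρ) * (l ⬝ᵥ l)
      + 2 / β * (l ⬝ᵥ (A *ᵥ x)) := by
  have hPx := dotProduct_mulVec_ge_of_posSemidef_sub hP x
  have hsq := quadratic_form_nonneg (div_pos hρ hε) (1 / β) (A *ᵥ x) l
  have hc : ρ * (1 / ε - 1) + ρ = ρ / ε := by field_simp; ring
  have hs : (1 / β) ^ 2 / (ρ / ε) = ε / (β ^ 2 * ρ) := by field_simp
  rw [hs, ← hc] at hsq
  rw [add_mulVec, smul_mulVec, dotProduct_add, dotProduct_smul, smul_eq_mul,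
    dotProduct_transpose_mul_self_mulVec]
  linear_combination hPx + hsq

end

theorem Q_posSemidef_quadratic_form_general
    (N m : ℕ) (n : Fin N → ℕ)
    (A : ∀ i : Fin N, Matrix (Fin m) (Fin (n i)) ℝ)
    (P : ∀ i : Fin N, Matrix (Fin (n i)) (Fin (n i)) ℝ)
    (ρ β : ℝ) (hρ : 0 < ρ)
    (ε : Fin N → ℝ) (hε : ∀ i, 0 < ε i)
    (hεsum : ∑ i, ε i ≤ 2 - β)
    (hP : ∀ i, (P i - (ρ * (1 / ε i - 1)) • ((A i)ᵀ * A i)).PosSemidef) :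
    ∀ (x : ∀ i : Fin N, Fin (n i) → ℝ) (lam : Fin m → ℝ),
      0 ≤ ∑ i, (x i) ⬝ᵥ ((P i + ρ • ((A i)ᵀ * A i)) *ᵥ (x i))
        + ((2 - β) / (β ^ 2 * ρ)) * (lam ⬝ᵥ lam)
        + (2 / β) * (lam ⬝ᵥ ∑ i, (A i) *ᵥ (x i)) := by
  intro x lam
  have hblocks := Finset.sum_nonneg fun i (_ : i ∈ Finset.univ) =>
    block_quadratic_form_nonneg hρ (hε i) (hP i) β (x i) lam
  rw [Finset.sum_add_distrib, Finset.sum_add_distrib, ← Finset.sum_mul, ← Finset.sum_div,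
    ← Finset.mul_sum, ← dotProduct_sum] at hblocks
  have hmult : (∑ i, ε i) / (β ^ 2 * ρ) * (lam ⬝ᵥ lam)
      ≤ (2 - β) / (β ^ 2 * ρ) * (lam ⬝ᵥ lam) := by
    gcongr
    exact dotProduct_self_nonneg lam
  linarith

theorem Q_posSemidef_quadratic_form
    (N m : ℕ) (n : Fin N → ℕ)
    (A : ∀ i : Fin N, Matrix (Fin m) (Fin (n i)) ℝ)
    (P : ∀ i : Fin N, Matrix (Fin (n i)) (Fin (n i)) ℝ)
    (ρ β : ℝ) (hρ : 0 < ρ) (hβ0 : 0 < β) (hβ2 : β < 2)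
    (hPsymm : ∀ i, (P i).IsSymm)
    (ε : Fin N → ℝ) (hε : ∀ i, 0 < ε i)
    (hεsum : ∑ i, ε i ≤ 2 - β)
    (hP : ∀ i, (P i - (ρ * (1 / ε i - 1)) • ((A i)ᵀ * A i)).PosSemidef) :
    ∀ (x : ∀ i : Fin N, Fin (n i) → ℝ) (lam : Fin m → ℝ),
      0 ≤ ∑ i, (x i) ⬝ᵥ ((P i + ρ • ((A i)ᵀ * A i)) *ᵥ (x i))
        + ((2 - β) / (β ^ 2 * ρ)) * (lam ⬝ᵥ lam)
        + (2 / β) * (lam ⬝ᵥ ∑ i, (A i) *ᵥ (x i)) :=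
  Q_posSemidef_quadratic_form_general N m n A P ρ β hρ ε hε hεsum hP
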